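/- (On an action Lie algebroid, equivariance turns ᴱd into −d_CE.) Let A be a commutative ℝ-algebra, 𝔤 a real Lie algebra, and ρ : 𝔤 → Der_ℝ(A) a Lie algebra homomorphism. Let α : 𝔤^m → A be an alternating ℝ-multilinear map which is equivariant, i.e., ρ(e)(α(e₁,…,e_m)) = Σ_{i=1}^m (−1)^{i−1} α(⁅e,e_i⁆, e₁,…,ê_i,…,e_m) for all e, e₁,…,e_m ∈ 𝔤. Then (ᴱdα)(e₁,…,e_{m+1}) = −(d_CE α)(e₁,…,e_{m+1}) for all e₁,…,e_{m+1} ∈ 𝔤, where ᴱdα is the Lie algebroid differential and d_CE α is the Chevalley–Eilenberg differential. -/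

import Mathlib

open scoped BigOperators

/-- The tuple obtained from `e : Fin (m+1) → L` by inserting `b` in front and
omitting the entries at positions `i` and `j` (intended for `i < j`). -/
def omit2cons {L : Type*} {m : ℕ} (b : L) (e : Fin (m + 1) → L) (i j : Fin (m + 1)) :
    Fin m → L := fun k =>
  if (k : ℕ) = 0 then b
  else e ⟨if (k : ℕ) - 1 < (i : ℕ) then (k : ℕ) - 1
          else if (k : ℕ) < (j : ℕ) then (k : ℕ) else (k : ℕ) + 1,
        by have := k.isLt; split_ifs <;> omega⟩

/-- The tuple obtained from `f : Fin m → L` by inserting `b` in front and omitting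
the entry at position `i`. -/
def consOmit1 {L : Type*} {m : ℕ} (b : L) (f : Fin m → L) (i : Fin m) : Fin m → L := fun k =>
  if (k : ℕ) = 0 then b
  else f ⟨if (k : ℕ) - 1 < (i : ℕ) then (k : ℕ) - 1 else (k : ℕ),
        by have := k.isLt; split_ifs <;> omega⟩


/-!
Expanding each `ρ(eᵢ)(α(e₁,…,êᵢ,…))` by equivariance produces, for every pair `i < j`, the
Chevalley–Eilenberg term of that pair twice, each time with a minus sign: once from `ρ(eᵢ)`, where
`eⱼ` sits at position `j - 1` of the shortened tuple, and once from `ρ(eⱼ)`, where `eᵢ` sits at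
position `i` and skew-symmetry of the bracket supplies the sign. So the anchor part of `ᴱdα` is
`−2 d_CE α`, and adding `d_CE α` leaves `−d_CE α`.
-/

lemma Fin.val_succAbove_eq_ite {m : ℕ} (i : Fin (m + 1)) (k : Fin m) :
    (i.succAbove k : ℕ) = if (k : ℕ) < i then (k : ℕ) else (k : ℕ) + 1 := by
  split_ifs with h
  · rw [Fin.succAbove_of_castSucc_lt _ _ (Fin.lt_def.mpr h), Fin.val_castSucc]
  · rw [Fin.succAbove_of_le_castSucc _ _ (Fin.le_def.mpr (by simpa using h)), Fin.val_succ]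

lemma Fin.sum_sum_succAbove {M : Type*} [AddCommMonoid M] {n : ℕ}
    (F : Fin (n + 1) → Fin (n + 1) → M) (hF : ∀ i, F i i = 0) :
    ∑ i, ∑ k : Fin n, F i (i.succAbove k) = ∑ i, ∑ j, F i j := by
  refine Finset.sum_congr rfl fun i _ => ?_
  rw [Fin.sum_univ_succAbove (F i) i, hF, zero_add]

lemma consOmit1_comp_succAbove {L : Type*} {m : ℕ} (b : L) (e : Fin (m + 1) → L)
    (i : Fin (m + 1)) (k : Fin m) :
    consOmit1 b (e ∘ i.succAbove) k =
      omit2cons b e (min i (i.succAbove k)) (max i (i.succAbove k)) := by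
  funext l
  by_cases hl : (l : ℕ) = 0
  · simp [consOmit1, omit2cons, hl]
  · simp only [consOmit1, omit2cons, hl, if_false, Function.comp_apply]
    congr 1
    ext
    simp only [Fin.val_succAbove_eq_ite, Fin.coe_min, Fin.coe_max]
    split_ifs <;> omega

lemma omit2cons_eq_update {L : Type*} {m : ℕ} [NeZero m] (b c : L) (e : Fin (m + 1) → L)
    (i j : Fin (m + 1)) :
    omit2cons b e i j = Function.update (omit2cons c e i j) 0 b := by
  funext l
  by_cases hl : l = 0
  · simp [hl, omit2cons]
  · rw [Function.update_of_ne hl]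
    simp [omit2cons, Fin.val_ne_zero_iff.mpr hl]

section ChevalleyEilenberg

variable {R M 𝔤 : Type*} [CommRing R] [LieRing 𝔤] [LieAlgebra R 𝔤] [AddCommGroup M] [Module R M]
  {m : ℕ} (α : AlternatingMap R 𝔤 M (Fin m)) (e : Fin (m + 1) → 𝔤)

lemma AlternatingMap.map_omit2cons_neg [NeZero m] (b : 𝔤) (i j : Fin (m + 1)) :
    α (omit2cons (-b) e i j) = -α (omit2cons b e i j) := by
  rw [omit2cons_eq_update (-b) 0, omit2cons_eq_update b 0, α.map_update_neg]

def chevalleyEilenbergTerm (i j : Fin (m + 1)) : M :=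
  if i < j then (-1 : ℤ) ^ ((i : ℕ) + (j : ℕ)) • α (omit2cons ⁅e i, e j⁆ e i j) else 0

lemma neg_one_pow_smul_map_consOmit1_succAbove (i : Fin (m + 1)) (k : Fin m) :
    (-1 : ℤ) ^ (i : ℕ) • (-1 : ℤ) ^ (k : ℕ) •
        α (consOmit1 ⁅e i, e (i.succAbove k)⁆ (e ∘ i.succAbove) k) =
      -(chevalleyEilenbergTerm α e i (i.succAbove k) +
        chevalleyEilenbergTerm α e (i.succAbove k) i) := by
  have : NeZero m := NeZero.of_pos k.pos
  rw [consOmit1_comp_succAbove, smul_smul, ← pow_add]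
  have hval := Fin.val_succAbove_eq_ite i k
  unfold chevalleyEilenbergTerm
  split_ifs at hval with hki
  · have hlt : i.succAbove k < i := Fin.lt_def.mpr (by omega)
    rw [min_eq_right hlt.le, max_eq_left hlt.le, if_neg hlt.not_gt, if_pos hlt, hval, ← lie_skew,
      α.map_omit2cons_neg, smul_neg, add_comm (i : ℕ)]
    simp
  · have hlt : i < i.succAbove k := Fin.lt_def.mpr (by omega)
    rw [min_eq_left hlt.le, max_eq_right hlt.le, if_pos hlt, if_neg hlt.not_gt, hval,
      show (i : ℕ) + ((k : ℕ) + 1) = (i : ℕ) + k + 1 by omega, pow_succ]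
    simp

lemma sum_neg_one_pow_smul_sum_map_consOmit1_succAbove :
    ∑ i : Fin (m + 1), (-1 : ℤ) ^ (i : ℕ) • ∑ k : Fin m, (-1 : ℤ) ^ (k : ℕ) •
        α (consOmit1 ⁅e i, e (i.succAbove k)⁆ (e ∘ i.succAbove) k) =
      -(∑ i, ∑ j, chevalleyEilenbergTerm α e i j + ∑ i, ∑ j, chevalleyEilenbergTerm α e i j) := by
  simp_rw [Finset.smul_sum, neg_one_pow_smul_map_consOmit1_succAbove]
  rw [Fin.sum_sum_succAbove (fun i j => -(chevalleyEilenbergTerm α e i j +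
    chevalleyEilenbergTerm α e j i)) (fun i => by simp [chevalleyEilenbergTerm])]
  simp only [Finset.sum_neg_distrib, Finset.sum_add_distrib]
  rw [Finset.sum_comm (f := fun i j => chevalleyEilenbergTerm α e j i)]

end ChevalleyEilenberg

theorem eDiff_eq_neg_cheEilenberg_of_equivariant_general
    {A : Type*} [CommRing A] [Algebra ℝ A]
    {𝔤 : Type*} [LieRing 𝔤] [LieAlgebra ℝ 𝔤]
    (ρ : 𝔤 →ₗ[ℝ] Derivation ℝ A A)
    {m : ℕ} (α : AlternatingMap ℝ 𝔤 A (Fin m))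
    (hequiv : ∀ (e : 𝔤) (f : Fin m → 𝔤),
      ρ e (α f) = ∑ i : Fin m, (-1 : ℤ) ^ (i : ℕ) • α (consOmit1 ⁅e, f i⁆ f i))
    (e : Fin (m + 1) → 𝔤) :
    (∑ i : Fin (m + 1), (-1 : ℤ) ^ (i : ℕ) • ρ (e i) (α (e ∘ i.succAbove)))
      + (∑ i : Fin (m + 1), ∑ j : Fin (m + 1),
          if i < j then
            (-1 : ℤ) ^ ((i : ℕ) + (j : ℕ)) • α (omit2cons ⁅e i, e j⁆ e i j)
          else 0)
    = - ∑ i : Fin (m + 1), ∑ j : Fin (m + 1),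
          if i < j then
            (-1 : ℤ) ^ ((i : ℕ) + (j : ℕ)) • α (omit2cons ⁅e i, e j⁆ e i j)
          else 0 := by
  change _ + ∑ i, ∑ j, chevalleyEilenbergTerm α e i j = -∑ i, ∑ j, chevalleyEilenbergTerm α e i j
  simp only [hequiv, Function.comp_apply]
  rw [sum_neg_one_pow_smul_sum_map_consOmit1_succAbove]
  abel

/-- (On an action Lie algebroid, equivariance turns `ᴱd` into `−d_CE`.)
Let `A` be a commutative `ℝ`-algebra, `𝔤` a real Lie algebra, `ρ : 𝔤 → Der_ℝ(A)` a Lie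
algebra homomorphism, and `α : 𝔤ᵐ → A` an alternating `ℝ`-multilinear map which is
equivariant, i.e. `ρ(e)(α(e₁,…,e_m)) = Σᵢ (−1)^{i−1} α(⁅e,eᵢ⁆, e₁,…,êᵢ,…,e_m)`.
Then `(ᴱdα)(e₁,…,e_{m+1}) = −(d_CE α)(e₁,…,e_{m+1})`. -/
theorem eDiff_eq_neg_cheEilenberg_of_equivariant
    {A : Type*} [CommRing A] [Algebra ℝ A]
    {𝔤 : Type*} [LieRing 𝔤] [LieAlgebra ℝ 𝔤]
    (ρ : 𝔤 →ₗ[ℝ] Derivation ℝ A A)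
    (hρ : ∀ e₁ e₂ : 𝔤, ρ ⁅e₁, e₂⁆ = ⁅ρ e₁, ρ e₂⁆)
    {m : ℕ} (α : AlternatingMap ℝ 𝔤 A (Fin m))
    (hequiv : ∀ (e : 𝔤) (f : Fin m → 𝔤),
      ρ e (α f) = ∑ i : Fin m, (-1 : ℤ) ^ (i : ℕ) • α (consOmit1 ⁅e, f i⁆ f i))
    (e : Fin (m + 1) → 𝔤) :
    (∑ i : Fin (m + 1), (-1 : ℤ) ^ (i : ℕ) • ρ (e i) (α (e ∘ i.succAbove)))
      + (∑ i : Fin (m + 1), ∑ j : Fin (m + 1),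
          if i < j then
            (-1 : ℤ) ^ ((i : ℕ) + (j : ℕ)) • α (omit2cons ⁅e i, e j⁆ e i j)
          else 0)
    = - ∑ i : Fin (m + 1), ∑ j : Fin (m + 1),
          if i < j then
            (-1 : ℤ) ^ ((i : ℕ) + (j : ℕ)) • α (omit2cons ⁅e i, e j⁆ e i j)
          else 0 :=
  eDiff_eq_neg_cheEilenberg_of_equivariant_general ρ α hequiv e
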